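/- Let k ≥ 3, m ≥ 1, let H be a subgraph of the torus C_k^m that does not wrap, and set r = |V(H)|. Suppose there exists a finite multiset of restricted copies of H in C_k^{m+1} that is a (1, 1, ..., 1, 1-k)-layered cover of C_k^{m+1}. If W is a finite multiset of restricted copies of H in C_k^m such that every vertex of C_k^m lies in a number of members of W, counted with multiplicity, congruent to k^m modulo r, then there exists a finite multiset W' of restricted copies of H in C_k^{m+1} such that every vertex of C_k^{m+1} lies in a number of members of W', counted with multiplicity, congruent to k^{m-1} modulo r. -/

import Mathlib

/-- The torus `C_k^n`. -/
def torus (k n : ℕ) : SimpleGraph (Fin n → ZMod k) :=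
  SimpleGraph.fromRel fun u v => ∃ i, u i - v i = 1 ∧ ∀ j, j ≠ i → u j = v j

/-- A set of vertices of `C_k^m` does not wrap: every coordinate of every vertex lies in
`{0, ..., k-2}` (identifying `ZMod k` with `{0, ..., k-1}`). -/
def DoesNotWrap (k m : ℕ) (A : Set (Fin m → ZMod k)) : Prop :=
  ∀ v ∈ A, ∀ i : Fin m, (v i).val ≤ k - 2

/-- The map `C_k^m → C_k^n` appending `n - m` zero coordinates. -/
def extendZeroMap (k m n : ℕ) (v : Fin m → ZMod k) : Fin n → ZMod k :=
  fun ℓ => if h : (ℓ : ℕ) < m then v ⟨ℓ, h⟩ else 0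

/-- The bend map `S^{n,s}_{i,j} : C_k^m → C_k^n` (with `i : Fin m` zero-indexed, so that
`i` here corresponds to coordinate `i+1 ∈ {1,...,m}` of the paper; `j ∈ {0,...,k-2}`;
the paper's coordinate `m+s` is the zero-indexed coordinate `m+s-1`).  A vertex `v` with
`v i < j` is extended by zeros; a vertex with `v i = j - 1 + t`, `t ≥ 1`, has its `i`-th
coordinate replaced by `j - 1` and its appended coordinate `m + s - 1` set to `t`. -/
def bendMap (k m n : ℕ) (i : Fin m) (j s : ℕ) (v : Fin m → ZMod k) : Fin n → ZMod k :=
  fun ℓ =>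
    if h : (ℓ : ℕ) < m then
      if (ℓ : ℕ) = (i : ℕ) then
        (if (v i).val < j then v i else (j : ZMod k) - 1)
      else v ⟨ℓ, h⟩
    else
      if (ℓ : ℕ) = m + s - 1 then
        (if (v i).val < j then 0 else v i - ((j : ZMod k) - 1))
      else 0

/-- `B ⊆ C_k^n` is a restricted copy of the set `A ⊆ C_k^m`: it is obtained from
`A × {0}^{n-m}` by a finite composition of translates and bend maps. -/
inductive IsRestrictedCopy (k : ℕ) {m : ℕ} (A : Set (Fin m → ZMod k)) :
    {n : ℕ} → Set (Fin n → ZMod k) → Prop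
  | extend {n : ℕ} (h : m ≤ n) : IsRestrictedCopy k A (extendZeroMap k m n '' A)
  | translate {n : ℕ} {B : Set (Fin n → ZMod k)} (w : Fin n → ZMod k)
      (hB : IsRestrictedCopy k A B) : IsRestrictedCopy k A ((· + w) '' B)
  | bend {n n' : ℕ} {B : Set (Fin n → ZMod k)} (h : n ≤ n') (i : Fin n) (j s : ℕ)
      (hj : j ≤ k - 2) (hs : 1 ≤ s) (hs' : s ≤ n' - n)
      (hB : IsRestrictedCopy k A B) : IsRestrictedCopy k A (bendMap k n n' i j s '' B)

open scoped Classical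

/-!
Translate the layered cover by the unit vector `e₀`, so that its exceptional layer (multiplicity
`1 - k`) becomes the layer `x₀ = 0`, and take it `k^(m-1)` times: every vertex is covered
`k^(m-1)` times, except those of that layer, which are covered `k^(m-1) - k^m` times. The bend
map with `j = 1`, `s = 1` is a bijection of `C_k^m` onto the layer `x₀ = 0`, so bending `W`
into it adds the missing `k^m`.
-/
open Function

section MoveCoordToLast

variable {α : Type*} [Zero α] {m : ℕ}

def moveCoordToLast (i : Fin m) (u : Fin m → α) : Fin (m + 1) → α :=
  Fin.snoc (update u i 0) (u i)

theorem mem_image_moveCoordToLast_iff (i : Fin m) (B : Set (Fin m → α)) (v : Fin (m + 1) → α) :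
    v ∈ moveCoordToLast i '' B ↔
      v i.castSucc = 0 ∧ update (Fin.init v) i (v (Fin.last m)) ∈ B := by
  constructor
  · rintro ⟨u, hu, rfl⟩
    simpa [moveCoordToLast, Fin.init_snoc] using hu
  · rintro ⟨hv, hu⟩
    refine ⟨_, hu, ?_⟩
    have hinit : update (Fin.init v) i 0 = Fin.init v := update_eq_self_iff.mpr hv.symm
    simp only [moveCoordToLast, update_idem, update_self, hinit, Fin.snoc_init_self]

theorem countP_mem_image_moveCoordToLast (i : Fin m) (W : Multiset (Set (Fin m → α)))
    (v : Fin (m + 1) → α) :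
    W.countP (fun B => v ∈ moveCoordToLast i '' B) =
      if v i.castSucc = 0 then W.countP (fun B => update (Fin.init v) i (v (Fin.last m)) ∈ B)
      else 0 := by
  simp only [mem_image_moveCoordToLast_iff]
  split_ifs with hv
  · simp only [hv, true_and]
  · simp only [hv, false_and, Multiset.countP_eq_zero, not_false_eq_true, implies_true]

end MoveCoordToLast

theorem bendMap_one_one_eq_moveCoordToLast (k m : ℕ) (i : Fin m) :
    bendMap k m (m + 1) i 1 1 = moveCoordToLast i := by
  funext u ℓ
  have hzero : (u i).val < 1 → u i = 0 := fun h => (ZMod.val_eq_zero _).mp (Nat.lt_one_iff.mp h)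
  induction ℓ using Fin.lastCases with
  | last =>
    simp only [bendMap, moveCoordToLast, Fin.snoc_last, Fin.val_last, lt_irrefl, dite_false,
      Nat.add_sub_cancel, if_true, Nat.cast_one, sub_self, sub_zero]
    split_ifs with h <;> simp [hzero, h]
  | cast ℓ =>
    simp only [bendMap, moveCoordToLast, Fin.snoc_castSucc, Fin.val_castSucc, ℓ.isLt, dite_true,
      Fin.val_inj, Nat.cast_one, sub_self]
    by_cases hℓ : ℓ = i
    · subst hℓ
      simp only [if_true, update_self]
      split_ifs with h
      · exact hzero h
      · rfl
    · simp [hℓ]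

theorem countP_mem_image_add_right {G : Type*} [AddGroup G] (L : Multiset (Set G)) (v w : G) :
    L.countP (fun B => v ∈ (· + w) '' B) = L.countP (fun B => v - w ∈ B) := by
  simp only [Set.image_add_right, Set.mem_preimage, sub_eq_add_neg]

theorem natCast_pred_eq_neg_one (k : ℕ) (hk : 1 ≤ k) : ((k - 1 : ℕ) : ZMod k) = -1 := by
  rw [Nat.cast_sub hk, ZMod.natCast_self, Nat.cast_one, zero_sub]

theorem cover_dimension_step_general (k m : ℕ) (hk : 3 ≤ k) (hm : 1 ≤ m)
    (H : (torus k m).Subgraph)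
    -- there is a `(1, 1, ..., 1, 1-k)`-layered cover of `C_k^{m+1}`, with `r = |V(H)|`
    (hL : ∃ L : Multiset (Set (Fin (m + 1) → ZMod k)),
      (∀ B ∈ L, IsRestrictedCopy k H.verts B) ∧
      ∀ v : Fin (m + 1) → ZMod k,
        (Multiset.countP (fun B => v ∈ B) L : ℤ) ≡
          (if v ⟨0, Nat.succ_pos m⟩ = ((k - 1 : ℕ) : ZMod k) then 1 - (k : ℤ) else 1)
          [ZMOD (H.verts.ncard : ℤ)])
    (W : Multiset (Set (Fin m → ZMod k)))
    (hWcopies : ∀ B ∈ W, IsRestrictedCopy k H.verts B)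
    (hW : ∀ v : Fin m → ZMod k,
      (Multiset.countP (fun B => v ∈ B) W : ℤ) ≡ (k : ℤ) ^ m [ZMOD (H.verts.ncard : ℤ)]) :
    ∃ W' : Multiset (Set (Fin (m + 1) → ZMod k)),
      (∀ B ∈ W', IsRestrictedCopy k H.verts B) ∧
      ∀ v : Fin (m + 1) → ZMod k,
        (Multiset.countP (fun B => v ∈ B) W' : ℤ) ≡ (k : ℤ) ^ (m - 1)
          [ZMOD (H.verts.ncard : ℤ)] := by
  obtain ⟨L, hLcopies, hL⟩ := hL
  set i : Fin m := ⟨0, hm⟩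
  set e : Fin (m + 1) → ZMod k := Pi.single i.castSucc 1
  refine ⟨k ^ (m - 1) • L.map ((· + e) '' ·) + W.map (moveCoordToLast i '' ·), ?_, fun v => ?_⟩
  · simp only [Multiset.mem_add, Multiset.mem_map]
    rintro B (hB | ⟨C, hC, rfl⟩)
    · obtain ⟨C, hC, rfl⟩ := Multiset.mem_map.mp (Multiset.mem_of_mem_nsmul hB)
      exact (hLcopies C hC).translate e
    · rw [← bendMap_one_one_eq_moveCoordToLast]
      exact (hWcopies C hC).bend (Nat.le_succ m) i 1 1 (by omega) le_rfl (by omega)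
  have hlayer : (v - e) ⟨0, Nat.succ_pos m⟩ = ((k - 1 : ℕ) : ZMod k) ↔ v i.castSucc = 0 := by
    change (v - e) i.castSucc = _ ↔ _
    simp [e, natCast_pred_eq_neg_one k (by omega)]
  have hpow : (k : ℤ) ^ (m - 1) * (1 - k) + k ^ m = k ^ (m - 1) := by
    obtain ⟨n, rfl⟩ := Nat.exists_eq_add_of_le' hm
    simp only [Nat.add_sub_cancel]; ring
  have hLv := hL (v - e)
  rw [Multiset.countP_add, Multiset.countP_nsmul, Multiset.countP_map, Multiset.countP_map,
    ← Multiset.countP_eq_card_filter, ← Multiset.countP_eq_card_filter,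
    countP_mem_image_add_right, countP_mem_image_moveCoordToLast]
  by_cases hv : v i.castSucc = 0
  · rw [if_pos (hlayer.mpr hv)] at hLv
    rw [if_pos hv, ← hpow]
    push_cast
    exact (hLv.mul_left _).add (hW _)
  · rw [if_neg (mt hlayer.mp hv)] at hLv
    rw [if_neg hv]
    push_cast
    simpa using hLv.mul_left ((k : ℤ) ^ (m - 1))

theorem cover_dimension_step (k m : ℕ) (hk : 3 ≤ k) (hm : 1 ≤ m)
    (H : (torus k m).Subgraph) (hw : DoesNotWrap k m H.verts)
    -- there is a `(1, 1, ..., 1, 1-k)`-layered cover of `C_k^{m+1}`, with `r = |V(H)|`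
    (hL : ∃ L : Multiset (Set (Fin (m + 1) → ZMod k)),
      (∀ B ∈ L, IsRestrictedCopy k H.verts B) ∧
      ∀ v : Fin (m + 1) → ZMod k,
        (Multiset.countP (fun B => v ∈ B) L : ℤ) ≡
          (if v ⟨0, Nat.succ_pos m⟩ = ((k - 1 : ℕ) : ZMod k) then 1 - (k : ℤ) else 1)
          [ZMOD (H.verts.ncard : ℤ)])
    (W : Multiset (Set (Fin m → ZMod k)))
    (hWcopies : ∀ B ∈ W, IsRestrictedCopy k H.verts B)
    (hW : ∀ v : Fin m → ZMod k,
      (Multiset.countP (fun B => v ∈ B) W : ℤ) ≡ (k : ℤ) ^ m [ZMOD (H.verts.ncard : ℤ)]) :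
    ∃ W' : Multiset (Set (Fin (m + 1) → ZMod k)),
      (∀ B ∈ W', IsRestrictedCopy k H.verts B) ∧
      ∀ v : Fin (m + 1) → ZMod k,
        (Multiset.countP (fun B => v ∈ B) W' : ℤ) ≡ (k : ℤ) ^ (m - 1)
          [ZMOD (H.verts.ncard : ℤ)] :=
  cover_dimension_step_general k m hk hm H hL W hWcopies hW
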